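/- arXiv:2012.12133 — 4 statements merged into one kernel-verified Lean document; each statement's English description precedes it below -/
import Mathlib

section
/- Let X be a finite integral FL-algebra and M an X-valued Kripke model where V([β]φ, s) = ⨅_{t∈S}(R_β(s,t) ⇒ V(φ,t)) and R_{α⁺} = (R_α)⁺. Then V(φ ∧ [α⁺]φ, s) = ⨅_{t∈S}(R*_α(s,t) ⇒ V(φ,t)), where R*_α(s,t) = 1 if s = t and R⁺_α(s,t) otherwise. -/
/-- An FL-algebra whose lattice is complete (e.g. a finite FL-algebra), so that
arbitrary joins/meets exist. -/
class FLAlgebraC (X : Type*) extends CompleteLattice X, Monoid X where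
  fzero : X
  ldiv : X → X → X
  rdiv : X → X → X
  resid_left : ∀ a b c : X, a * b ≤ c ↔ b ≤ ldiv a c
  resid_right : ∀ a b c : X, a * b ≤ c ↔ a ≤ rdiv c b

/-- a ⇒ b := b / a -/
def fimp {X : Type*} [FLAlgebraC X] (a b : X) : X := FLAlgebraC.rdiv b a

/-- R s π t : the product of R-values along the path s, π(0), …, π(n-1), t. -/
def Rpath {X S : Type*} [FLAlgebraC X] (R : S → S → X) : S → List S → S → X
  | s, [], t => R s t
  | s, u :: rest, t => R s u * Rpath R u rest t

/-- X-valued transitive closure: R⁺(s,t) = ⨆_π R s π t. -/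
def Rplus {X S : Type*} [FLAlgebraC X] (R : S → S → X) (s t : S) : X :=
  ⨆ π : List S, Rpath R s π t

open Classical in
/-- R*(s,t) = 1 if s = t, else R⁺(s,t). -/
noncomputable def Rstar {X S : Type*} [FLAlgebraC X] (R : S → S → X) (s t : S) : X :=
  if s = t then 1 else Rplus R s t

/-- For integral X: V(φ ∧ [α⁺]φ, s) = ⨅_t (R*_α(s,t) ⇒ V(φ,t)). -/
theorem stmt12 {X S : Type*} [FLAlgebraC X] [Finite X]
    (hint : ∀ a : X, a ≤ 1) (R : S → S → X) (Vφ : S → X) (s : S) :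
    (Vφ s ⊓ ⨅ t, fimp (Rplus R s t) (Vφ t)) = ⨅ t, fimp (Rstar R s t) (Vφ t) := by
  have fimp_one : ∀ a : X, fimp 1 a = a := by
    intro a
    apply le_antisymm
    · calc fimp 1 a = fimp 1 a * 1 := (mul_one _).symm
        _ ≤ a := (FLAlgebraC.resid_right _ _ _).mpr le_rfl
    · exact (FLAlgebraC.resid_right a 1 a).mp (by rw [mul_one])
  have le_fimp : ∀ a b : X, b ≤ fimp a b := by
    intro a b
    apply (FLAlgebraC.resid_right _ _ _).mp
    apply (FLAlgebraC.resid_left _ _ _).mpr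
    exact le_trans (hint a) ((FLAlgebraC.resid_left b 1 b).mp (by rw [mul_one]))
  apply le_antisymm
  · apply le_iInf
    intro t
    by_cases h : s = t
    · subst h
      rw [Rstar, if_pos rfl, fimp_one]
      exact inf_le_left
    · rw [Rstar, if_neg h]
      exact le_trans inf_le_right (iInf_le _ t)
  · apply le_inf
    · have := iInf_le (fun t => fimp (Rstar R s t) (Vφ t)) s
      rwa [Rstar, if_pos rfl, fimp_one] at this
    · apply le_iInf
      intro t
      by_cases h : s = t
      · subst h
        have := iInf_le (fun t => fimp (Rstar R s t) (Vφ t)) s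
        rw [Rstar, if_pos rfl, fimp_one] at this
        exact le_trans this (le_fimp _ _)
      · have := iInf_le (fun t => fimp (Rstar R s t) (Vφ t)) t
        rwa [Rstar, if_neg h] at this
end

section
/- Let X be a finite FL-algebra and M an X-valued model with R_{α⁺} = (R_α)⁺, the X-valued transitive closure. Then V([α⁺]φ, s) = V([α](φ ∧ [α⁺]φ), s) for all s. -/
lemma le_fimp_iff {X : Type*} [FLAlgebraC X] {x a b : X} :
    x ≤ fimp a b ↔ x * a ≤ b := (FLAlgebraC.resid_right x a b).symm

lemma mul_iSup_le_iff {X : Type*} [FLAlgebraC X] {ι : Sort*} {a c : X} {f : ι → X} :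
    a * (⨆ i, f i) ≤ c ↔ ∀ i, a * f i ≤ c := by
  rw [FLAlgebraC.resid_left, iSup_le_iff]
  simp [← FLAlgebraC.resid_left]

lemma le_lhs_iff {X S : Type*} [FLAlgebraC X] (R : S → S → X) (Vφ : S → X) (s : S) (x : X) :
    x ≤ (⨅ t, fimp (Rplus R s t) (Vφ t)) ↔ ∀ t (π : List S), x * Rpath R s π t ≤ Vφ t := by
  simp only [le_iInf_iff, le_fimp_iff, Rplus, mul_iSup_le_iff]

lemma le_rhs_iff {X S : Type*} [FLAlgebraC X] (R : S → S → X) (Vφ : S → X) (s : S) (x : X) :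
    x ≤ (⨅ t, fimp (R s t) (Vφ t ⊓ ⨅ u, fimp (Rplus R t u) (Vφ u))) ↔
      ∀ t (π : List S), x * Rpath R s π t ≤ Vφ t := by
  simp only [le_iInf_iff, le_fimp_iff, le_inf_iff, Rplus, mul_iSup_le_iff]
  constructor
  · intro h t π
    cases π with
    | nil => exact (h t).1
    | cons u rest =>
        have := (h u).2 t rest
        simpa [Rpath, mul_assoc] using this
  · intro h t
    refine ⟨h t [], fun u π => ?_⟩
    have := h u (t :: π)
    simpa [Rpath, mul_assoc] using this

/-- V([α⁺]φ, s) = V([α](φ ∧ [α⁺]φ), s). -/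
theorem stmt16 {X S : Type*} [FLAlgebraC X] [Finite X]
    (R : S → S → X) (Vφ : S → X) (s : S) :
    (⨅ t, fimp (Rplus R s t) (Vφ t)) =
      ⨅ t, fimp (R s t) (Vφ t ⊓ ⨅ u, fimp (Rplus R t u) (Vφ u)) := by
  apply le_antisymm
  · exact (le_rhs_iff R Vφ s _).mpr ((le_lhs_iff R Vφ s _).mp le_rfl)
  · exact (le_lhs_iff R Vφ s _).mpr ((le_rhs_iff R Vφ s _).mp le_rfl)
end

section
/- Soundness of the iteration rule: let X be a finite FL-algebra and M an X-valued model with R_{α⁺} = (R_α)⁺. If V(φ,s) ⊑ V([α]φ,s) for all states s, then V(φ,s) ⊑ V([α⁺]φ,s) for all states s. -/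
lemma mul_le_mul_right'' {X : Type*} [FLAlgebraC X] {a b : X} (hab : a ≤ b) (c : X) :
    a * c ≤ b * c := by
  have : b ≤ FLAlgebraC.rdiv (b * c) c := (FLAlgebraC.resid_right b c (b * c)).mp le_rfl
  exact (FLAlgebraC.resid_right a c (b * c)).mpr (hab.trans this)

lemma path_le {X S : Type*} [FLAlgebraC X] (R : S → S → X) (Vφ : S → X)
    (h : ∀ s t, Vφ s * R s t ≤ Vφ t) :
    ∀ (π : List S) (s t : S), Vφ s * Rpath R s π t ≤ Vφ t := by
  intro π
  induction π with
  | nil => intro s t; exact h s t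
  | cons u rest ih =>
    intro s t
    have h1 : Vφ s * (R s u * Rpath R u rest t) = (Vφ s * R s u) * Rpath R u rest t :=
      (mul_assoc _ _ _).symm
    calc Vφ s * Rpath R s (u :: rest) t
        = (Vφ s * R s u) * Rpath R u rest t := h1
      _ ≤ Vφ u * Rpath R u rest t := mul_le_mul_right'' (h s u) _
      _ ≤ Vφ t := ih u t

/-- Soundness of the iteration rule (R-+). -/
theorem stmt17 {X S : Type*} [FLAlgebraC X] [Finite X]
    (R : S → S → X) (Vφ : S → X)
    (h : ∀ s, Vφ s ≤ ⨅ t, fimp (R s t) (Vφ t)) :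
    ∀ s, Vφ s ≤ ⨅ t, fimp (Rplus R s t) (Vφ t) := by
  have hstep : ∀ s t, Vφ s * R s t ≤ Vφ t := fun s t =>
    (FLAlgebraC.resid_right _ _ _).mpr ((h s).trans (iInf_le _ t))
  intro s
  refine le_iInf fun t => ?_
  refine (FLAlgebraC.resid_right _ _ _).mp ?_
  rw [FLAlgebraC.resid_left]
  refine iSup_le fun π => ?_
  rw [← FLAlgebraC.resid_left]
  exact path_le R Vφ hstep π s t
end

section
/- Filtration lemma for atomic actions: let X be a finite FL-algebra, M an X-valued model, Φ a finite closed set of formulas, ≈ the equivalence s ≈ t iff V(φ,s)=V(φ,t) for all φ∈Φ, and define R^Φ_a([s],[t]) = ⨆{R_a(u,v) : u ≈ s, v ≈ t}. Then for every formula [a]φ ∈ Φ (a atomic) and all states x, y: V([a]φ, x) ⊑ R^Φ_a([x],[y]) ⇒ V(φ, y). -/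
/-- Filtration lemma for atomic actions: for [a]φ ∈ Φ,
V([a]φ, x) ⊑ R^Φ_a([x],[y]) ⇒ V(φ, y). -/
theorem stmt19 {X S F : Type*} [FLAlgebraC X] [Finite X]
    (Φ : Set F) (V : F → S → X) (R : S → S → X)
    (boxφ φ : F) (hboxΦ : boxφ ∈ Φ) (hφΦ : φ ∈ Φ)
    (hV : ∀ x, V boxφ x = ⨅ z, fimp (R x z) (V φ z))
    (x y : S) :
    V boxφ x ≤
      fimp (sSup {c : X | ∃ u v : S,
          (∀ ψ ∈ Φ, V ψ u = V ψ x) ∧ (∀ ψ ∈ Φ, V ψ v = V ψ y) ∧ R u v = c})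
        (V φ y) := by
  rw [fimp, ← FLAlgebraC.resid_right, FLAlgebraC.resid_left, sSup_le_iff]
  rintro c ⟨u, v, hu, hv, rfl⟩
  rw [← FLAlgebraC.resid_left, ← hv φ hφΦ, FLAlgebraC.resid_right, ← fimp,
    ← hu boxφ hboxΦ, hV u]
  exact iInf_le _ v
end
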